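/- arXiv:2505.01240 — 2 statements merged into one kernel-verified Lean document; each statement's English description precedes it below -/
import Mathlib

section
/- Assume v_* ∈ V_b is the unique minimizer of the isotropic (1,2)-norm f over V_b, and let S = {j : (v_*)_j ≠ 0}. If q and q' are both fixed points of H_τ for some τ > 0, then q − q' lies in U^⊥ ∩ W^⊥, where U^⊥ is the orthogonal complement of U = K(ker A) in V and W^⊥ = {z ∈ V : z_j = 0 for all j ∈ S}. In particular, if U^⊥ ∩ W^⊥ = {0}, then H_τ has at most one fixed point. -/
/-!
A fixed point `q` of `H_τ` satisfies `P(2 S_τ q - q) = S_τ q`, so `S_τ q ∈ V_b` and, the residual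
of a metric projection onto `V_b` being orthogonal to its direction `U`, `S_τ q - q ∈ U^⊥`.
The subgradient inequality of the shrinkage operator (it is the proximal map of `τ f`) then
shows that `S_τ q` minimizes `f` over `V_b`, hence `S_τ q = v_*`. Consequently two fixed points
differ by an element of `U^⊥`, and on the support of `v_*` each block of `q` is recovered from
`(v_*)_j` as `(1 + τ / ‖(v_*)_j‖) (v_*)_j`, so they agree there.
-/

open scoped RealInnerProductSpace
open scoped Classical

noncomputable section

/-- The space `V` of `N`-tuples of vectors in `ℝ^d`, with the ℓ²-product inner product. -/
abbrev Vsp (N d : ℕ) : Type := PiLp 2 (fun _ : Fin N => EuclideanSpace ℝ (Fin d))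

/-- The blockwise shrinkage (block soft-thresholding) operator `S_τ`. -/
noncomputable def shrink {N d : ℕ} (τ : ℝ) (q : Vsp N d) : Vsp N d :=
  WithLp.toLp 2 (fun j => if ‖q j‖ ≤ τ then 0 else q j - (τ / ‖q j‖) • q j)

/-- The blockwise normalization operator `𝒩`. -/
noncomputable def nrmOp {N d : ℕ} (q : Vsp N d) : Vsp N d :=
  WithLp.toLp 2 (fun j => if q j = 0 then 0 else ‖q j‖⁻¹ • q j)

/-- The subspace of vectors in `V` vanishing on a given set of block indices. -/
def vanishingOn {N d : ℕ} (s : Set (Fin N)) : Submodule ℝ (Vsp N d) where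
  carrier := {z | ∀ j ∈ s, z j = 0}
  add_mem' := by
    intro a b ha hb j hj
    simp only [PiLp.add_apply, ha j hj, hb j hj, add_zero]
  zero_mem' := by
    intro j hj
    simp only [PiLp.zero_apply]
  smul_mem' := by
    intro c a ha j hj
    simp only [PiLp.smul_apply, ha j hj, smul_zero]

section BlockShrink

variable {E : Type*} [NormedAddCommGroup E] [InnerProductSpace ℝ E]

def blockShrink (τ : ℝ) (a : E) : E :=
  if ‖a‖ ≤ τ then 0 else a - (τ / ‖a‖) • a

lemma norm_inv_norm_smul_self {a : E} (ha : a ≠ 0) : ‖‖a‖⁻¹ • a‖ = 1 := by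
  rw [norm_smul, norm_inv, norm_norm, inv_mul_cancel₀ (norm_ne_zero_iff.mpr ha)]

lemma blockShrink_of_lt {τ : ℝ} {a : E} (h : τ < ‖a‖) :
    blockShrink τ a = (‖a‖ - τ) • ‖a‖⁻¹ • a := by
  rcases eq_or_ne a 0 with rfl | ha
  · simp [blockShrink]
  have hna : ‖a‖ ≠ 0 := norm_ne_zero_iff.mpr ha
  rw [blockShrink, if_neg h.not_ge, smul_smul, sub_mul, mul_inv_cancel₀ hna, sub_smul,
    one_smul, div_eq_mul_inv]

lemma norm_blockShrink_of_lt {τ : ℝ} (hτ : 0 ≤ τ) {a : E} (h : τ < ‖a‖) :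
    ‖blockShrink τ a‖ = ‖a‖ - τ := by
  have ha : a ≠ 0 := norm_pos_iff.mp (hτ.trans_lt h)
  rw [blockShrink_of_lt h, norm_smul, norm_inv_norm_smul_self ha, mul_one,
    Real.norm_eq_abs, abs_of_pos (sub_pos.mpr h)]

/-- The subgradient inequality of `τ ‖·‖` at `blockShrink τ a`, whose proximal point it is. -/
lemma blockShrink_prox {τ : ℝ} (hτ : 0 ≤ τ) (a c : E) :
    τ * ‖blockShrink τ a‖ + ⟪a - blockShrink τ a, c - blockShrink τ a⟫ ≤ τ * ‖c‖ := by
  by_cases h : ‖a‖ ≤ τ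
  · simp only [blockShrink, if_pos h, norm_zero, mul_zero, sub_zero, zero_add]
    calc ⟪a, c⟫ ≤ ‖a‖ * ‖c‖ := real_inner_le_norm a c
      _ ≤ τ * ‖c‖ := by gcongr
  push Not at h
  have ha : a ≠ 0 := norm_pos_iff.mp (hτ.trans_lt h)
  set u := ‖a‖⁻¹ • a
  have hu : ‖u‖ = 1 := norm_inv_norm_smul_self ha
  have hau : a = ‖a‖ • u := by
    rw [smul_smul, mul_inv_cancel₀ (norm_ne_zero_iff.mpr ha), one_smul]
  have hres : a - blockShrink τ a = τ • u := by
    rw [blockShrink_of_lt h]; nth_rw 1 [hau]; rw [← sub_smul, sub_sub_cancel]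
  rw [hres, norm_blockShrink_of_lt hτ h, blockShrink_of_lt h, inner_smul_left, inner_sub_right,
    inner_smul_right, real_inner_self_eq_norm_sq, hu]
  have huc : ⟪u, c⟫ ≤ ‖c‖ := by simpa [hu] using real_inner_le_norm u c
  simp only [RCLike.conj_to_real]
  linarith [mul_le_mul_of_nonneg_left huc hτ]

lemma eq_smul_blockShrink {τ : ℝ} (hτ : 0 ≤ τ) {a : E} (h : blockShrink τ a ≠ 0) :
    a = (1 + τ / ‖blockShrink τ a‖) • blockShrink τ a := by
  have hlt : τ < ‖a‖ := by
    by_contra! hle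
    exact h (if_pos hle)
  have hpos : ‖a‖ - τ ≠ 0 := (sub_pos.mpr hlt).ne'
  rw [norm_blockShrink_of_lt hτ hlt, blockShrink_of_lt hlt, smul_smul, smul_smul]
  have hna : ‖a‖ ≠ 0 := (hτ.trans_lt hlt).ne'
  field_simp
  simp [hna]

end BlockShrink

section Shrink

variable {N d : ℕ} {τ : ℝ}

lemma shrink_apply (τ : ℝ) (q : Vsp N d) (j : Fin N) :
    shrink τ q j = blockShrink τ (q j) := rfl

lemma shrink_prox (hτ : 0 ≤ τ) (q z : Vsp N d) :
    τ * ∑ j, ‖shrink τ q j‖ + ⟪q - shrink τ q, z - shrink τ q⟫ ≤ τ * ∑ j, ‖z j‖ := by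
  rw [PiLp.inner_apply, Finset.mul_sum, Finset.mul_sum, ← Finset.sum_add_distrib]
  exact Finset.sum_le_sum fun j _ => blockShrink_prox hτ (q j) (z j)

lemma sum_norm_shrink_le_of_inner_eq_zero (hτ : 0 < τ) {q z : Vsp N d}
    (h : ⟪q - shrink τ q, z - shrink τ q⟫ = 0) :
    ∑ j, ‖shrink τ q j‖ ≤ ∑ j, ‖z j‖ := by
  have := shrink_prox hτ.le q z
  rw [h, add_zero] at this
  exact le_of_mul_le_mul_left this hτ

lemma sub_mem_vanishingOn_of_shrink_eq (hτ : 0 ≤ τ) {q q' : Vsp N d}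
    (h : shrink τ q = shrink τ q') :
    q - q' ∈ vanishingOn {j | shrink τ q j ≠ 0} := by
  intro j hj
  have hj' : shrink τ q' j ≠ 0 := h ▸ hj
  rw [PiLp.sub_apply, shrink_apply] at *
  rw [eq_smul_blockShrink hτ hj, eq_smul_blockShrink hτ hj', ← shrink_apply, ← shrink_apply, h,
    sub_self]

end Shrink

lemma sub_mem_orthogonal_of_forall_norm_le {F : Type*} [NormedAddCommGroup F]
    [InnerProductSpace ℝ F] (U : Submodule ℝ F) {x p : F}
    (h : ∀ w ∈ U, ‖x - p‖ ≤ ‖x - (p + w)‖) : x - p ∈ Uᗮ := by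
  have hbdd : BddBelow (Set.range fun w : (U : Set F) => ‖x - p - w‖) := by
    refine ⟨0, ?_⟩
    rintro _ ⟨w, rfl⟩
    exact norm_nonneg _
  have hmin : ‖x - p - 0‖ = ⨅ w : (U : Set F), ‖x - p - w‖ :=
    le_antisymm (le_ciInf fun w => by simpa [sub_sub] using h w w.2)
      (ciInf_le hbdd ⟨0, U.zero_mem⟩)
  rw [Submodule.norm_eq_iInf_iff_real_inner_eq_zero U U.zero_mem, sub_zero] at hmin
  exact (Submodule.mem_orthogonal' U _).mpr hmin

section AffineConstraint

variable {V X Z : Type*} [NormedAddCommGroup V] [InnerProductSpace ℝ V]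
  [AddCommGroup X] [Module ℝ X] [AddCommGroup Z] [Module ℝ Z]
  (K : X →ₗ[ℝ] V) (A : X →ₗ[ℝ] Z) (b : Z)

lemma sub_mem_map_ker {u u' : X} (hu : A u = b) (hu' : A u' = b) :
    K u - K u' ∈ (LinearMap.ker A).map K :=
  ⟨u - u', by simp [hu, hu'], map_sub K u u'⟩

lemma sub_metricProj_mem_orthogonal (P : V → V)
    (hP : ∀ q : V, (∃ u, A u = b ∧ K u = P q) ∧
      ∀ v, (∃ u, A u = b ∧ K u = v) → ‖q - P q‖ ≤ ‖q - v‖)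
    (x : V) : x - P x ∈ ((LinearMap.ker A).map K)ᗮ := by
  obtain ⟨⟨u₀, hu₀, hKu₀⟩, hmin⟩ := hP x
  refine sub_mem_orthogonal_of_forall_norm_le _ fun w hw => hmin _ ?_
  obtain ⟨k, hk, rfl⟩ := hw
  exact ⟨u₀ + k, by simp [hu₀, LinearMap.mem_ker.mp hk], by simp [hKu₀]⟩

end AffineConstraint

/-- The Douglas–Rachford operator `H_τ`. -/
def douglasRachford {N d : ℕ} (P : Vsp N d → Vsp N d) (τ : ℝ) (q : Vsp N d) : Vsp N d :=
  P ((2 : ℝ) • shrink τ q - q) + q - shrink τ q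

section FixedPoint

variable {N d : ℕ} {X Z : Type*} [AddCommGroup X] [Module ℝ X] [AddCommGroup Z] [Module ℝ Z]
  (K : X →ₗ[ℝ] Vsp N d) (A : X →ₗ[ℝ] Z) (b : Z) {P : Vsp N d → Vsp N d}

lemma shrink_eq_of_isFixedPt
    (hP : ∀ q : Vsp N d, (∃ u, A u = b ∧ K u = P q) ∧
      ∀ v, (∃ u, A u = b ∧ K u = v) → ‖q - P q‖ ≤ ‖q - v‖)
    {τ : ℝ} (hτ : 0 < τ) {vstar : Vsp N d} (hvb : ∃ u, A u = b ∧ K u = vstar)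
    (hmin : ∀ v : Vsp N d, (∃ u, A u = b ∧ K u = v) → v ≠ vstar →
      (∑ j, ‖vstar j‖) < ∑ j, ‖v j‖)
    {q : Vsp N d} (hq : Function.IsFixedPt (douglasRachford P τ) q) :
    shrink τ q = vstar ∧ vstar - q ∈ ((LinearMap.ker A).map K)ᗮ := by
  set s := shrink τ q
  have hPs : P ((2 : ℝ) • s - q) = s := by
    calc P ((2 : ℝ) • s - q) = douglasRachford P τ q - q + s := by
          simp only [douglasRachford, s]; abel
      _ = s := by rw [hq, sub_self, zero_add]
  obtain ⟨u, hu, hKu⟩ : ∃ u, A u = b ∧ K u = s := hPs ▸ (hP _).1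
  have horth : s - q ∈ ((LinearMap.ker A).map K)ᗮ := by
    have := sub_metricProj_mem_orthogonal K A b P hP ((2 : ℝ) • s - q)
    rwa [hPs, two_smul, add_sub_right_comm, add_sub_cancel_right] at this
  have hs_min : ∀ z, (∃ u, A u = b ∧ K u = z) → ∑ j, ‖s j‖ ≤ ∑ j, ‖z j‖ := by
    rintro _ ⟨u', hu', rfl⟩
    refine sum_norm_shrink_le_of_inner_eq_zero hτ ?_
    have h0 := Submodule.inner_left_of_mem_orthogonal (sub_mem_map_ker K A b hu' hu) horth
    rw [hKu] at h0
    rw [← neg_sub, inner_neg_left, neg_eq_zero]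
    exact h0
  have hs : s = vstar := by
    by_contra hne
    exact (hs_min vstar hvb).not_gt (hmin s ⟨u, hu, hKu⟩ hne)
  exact ⟨hs, hs ▸ horth⟩

end FixedPoint

theorem tv_cs_drs_fixed_point_difference_general
    {N d : ℕ}
    {X Z : Type*} [NormedAddCommGroup X] [InnerProductSpace ℝ X]
    [NormedAddCommGroup Z] [InnerProductSpace ℝ Z]
    (K : X →ₗ[ℝ] Vsp N d) (A : X →ₗ[ℝ] Z) (b : Z)
    -- `P` is the metric projection onto the affine set `V_b = {K u : A u = b}`
    (P : Vsp N d → Vsp N d)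
    (hP : ∀ q : Vsp N d, (∃ u, A u = b ∧ K u = P q) ∧
      ∀ v, (∃ u, A u = b ∧ K u = v) → ‖q - P q‖ ≤ ‖q - v‖)
    (τ : ℝ) (hτ : 0 < τ)
    (vstar : Vsp N d)
    -- `v_* ∈ V_b`
    (hvb : ∃ u, A u = b ∧ K u = vstar)
    -- `v_*` is the unique minimizer of `f(v) = Σ_j ‖v_j‖` over `V_b`
    (hmin : ∀ v : Vsp N d, (∃ u, A u = b ∧ K u = v) → v ≠ vstar →
      (∑ j, ‖vstar j‖) < ∑ j, ‖v j‖)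
    (q q' : Vsp N d)
    (hq : P ((2 : ℝ) • shrink τ q - q) + q - shrink τ q = q)
    (hq' : P ((2 : ℝ) • shrink τ q' - q') + q' - shrink τ q' = q') :
    q - q' ∈ ((LinearMap.ker A).map K)ᗮ ⊓ vanishingOn (d := d) {j | vstar j ≠ 0} ∧
      (((LinearMap.ker A).map K)ᗮ ⊓ vanishingOn (d := d) {j | vstar j ≠ 0} = ⊥ →
        q = q') := by
  obtain ⟨hs, hU⟩ := shrink_eq_of_isFixedPt K A b hP hτ hvb hmin hq
  obtain ⟨hs', hU'⟩ := shrink_eq_of_isFixedPt K A b hP hτ hvb hmin hq'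
  have hW : q - q' ∈ vanishingOn (d := d) {j | vstar j ≠ 0} :=
    hs ▸ sub_mem_vanishingOn_of_shrink_eq hτ.le (hs.trans hs'.symm)
  have hmem : q - q' ∈ ((LinearMap.ker A).map K)ᗮ ⊓ vanishingOn {j | vstar j ≠ 0} :=
    Submodule.mem_inf.mpr ⟨by simpa only [sub_sub_sub_cancel_left] using sub_mem hU' hU, hW⟩
  refine ⟨hmem, fun hbot => sub_eq_zero.mp ?_⟩
  rwa [hbot, Submodule.mem_bot] at hmem

/-- Uniqueness part of Lemma 4.3: any two fixed points of the
Douglas–Rachford operator `H_τ` differ by an element of `U^⊥ ∩ W^⊥`, where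
`U = K(ker A)` and `W^⊥ = {z : z_j = 0 for all j ∈ S}`; in particular, if
`U^⊥ ∩ W^⊥ = {0}`, the fixed point is unique. -/
theorem tv_cs_drs_fixed_point_difference
    {N d : ℕ} (hN : 0 < N) (hd : 0 < d)
    {X Z : Type*} [NormedAddCommGroup X] [InnerProductSpace ℝ X] [FiniteDimensional ℝ X]
    [NormedAddCommGroup Z] [InnerProductSpace ℝ Z] [FiniteDimensional ℝ Z]
    (K : X →ₗ[ℝ] Vsp N d) (A : X →ₗ[ℝ] Z) (b : Z) (hb : ∃ u, A u = b)
    -- `P` is the metric projection onto the affine set `V_b = {K u : A u = b}`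
    (P : Vsp N d → Vsp N d)
    (hP : ∀ q : Vsp N d, (∃ u, A u = b ∧ K u = P q) ∧
      ∀ v, (∃ u, A u = b ∧ K u = v) → ‖q - P q‖ ≤ ‖q - v‖)
    (τ : ℝ) (hτ : 0 < τ)
    (vstar : Vsp N d)
    -- `v_* ∈ V_b`
    (hvb : ∃ u, A u = b ∧ K u = vstar)
    -- `v_*` is the unique minimizer of `f(v) = Σ_j ‖v_j‖` over `V_b`
    (hmin : ∀ v : Vsp N d, (∃ u, A u = b ∧ K u = v) → v ≠ vstar →
      (∑ j, ‖vstar j‖) < ∑ j, ‖v j‖)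
    (q q' : Vsp N d)
    (hq : P ((2 : ℝ) • shrink τ q - q) + q - shrink τ q = q)
    (hq' : P ((2 : ℝ) • shrink τ q' - q') + q' - shrink τ q' = q') :
    q - q' ∈ ((LinearMap.ker A).map K)ᗮ ⊓ vanishingOn (d := d) {j | vstar j ≠ 0} ∧
      (((LinearMap.ker A).map K)ᗮ ⊓ vanishingOn (d := d) {j | vstar j ≠ 0} = ⊥ →
        q = q') :=
  tv_cs_drs_fixed_point_difference_general K A b P hP τ hτ vstar hvb hmin q q' hq hq'
end
end

section
/- Fix τ > 0, λ ∈ ℝ, and v_* ∈ V with support S = {j : (v_*)_j ≠ 0}. For all q, q' ∈ Q, the relaxed Douglas–Rachford operator H_τ^λ = (1−λ)·id + λ·H_τ satisfies H_τ^λ(q) − H_τ^λ(q') = ((1−λ)·id + λ(C ∘ P_S + (id − C) ∘ (id − P_S)))(q − q') + τλ (id − 2C)(P_S(𝒩(q)) − P_S(𝒩(q'))), where C is the orthogonal projection onto U = K(ker A) and P_S is the orthogonal projection onto W = {z ∈ V : z_j = 0 for all j ∉ S}. -/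
open scoped RealInnerProductSpace
open scoped Classical

noncomputable section

/-!
The first-order condition of the metric projection `P` onto the affine set `V_b` says that
`q - P q` is orthogonal to its direction `U = K(ker A)`; hence `P` is affine with linear part `C`,
i.e. `P x - P y = C (x - y)`. On `Q` the shrinkage acts blockwise with a fixed support, so
`S_τ(q) = P_S(q - τ 𝒩(q))` is affine in `q` and `𝒩(q)`. Substituting both into `H_τ^λ`, the
decomposition is a linear identity.
-/

section MetricProjection

variable {F : Type*} [NormedAddCommGroup F] [InnerProductSpace ℝ F]

theorem real_inner_eq_zero_of_forall_norm_le_norm_sub_smul {a v : F}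
    (h : ∀ t : ℝ, ‖a‖ ≤ ‖a - t • v‖) : ⟪a, v⟫ = 0 := by
  set t := ⟪a, v⟫ / (‖v‖ ^ 2 + 1)
  have hct : ⟪a, v⟫ = t * (‖v‖ ^ 2 + 1) := by
    simp only [t]
    field_simp
  have hsq : ‖a‖ ^ 2 ≤ ‖a - t • v‖ ^ 2 := pow_le_pow_left₀ (norm_nonneg _) (h t) 2
  rw [norm_sub_sq_real, real_inner_smul_right, norm_smul, Real.norm_eq_abs, mul_pow, sq_abs,
    hct] at hsq
  -- the inequality now reads `0 ≤ -t² (‖v‖² + 2)`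
  have ht : t = 0 := by nlinarith [sq_nonneg t, sq_nonneg ‖v‖]
  rw [hct, ht, zero_mul]

theorem sub_mem_orthogonal_of_forall_norm_sub_le {s : Set F} {U : Submodule ℝ F}
    (hs : ∀ p ∈ s, ∀ u ∈ U, p + u ∈ s) {x p : F} (hp : p ∈ s)
    (hmin : ∀ v ∈ s, ‖x - p‖ ≤ ‖x - v‖) : x - p ∈ Uᗮ := by
  rw [Submodule.mem_orthogonal']
  intro u hu
  refine real_inner_eq_zero_of_forall_norm_le_norm_sub_smul fun t => ?_
  rw [sub_sub]
  exact hmin _ (hs p hp _ (U.smul_mem t hu))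

theorem Submodule.starProjection_sub_eq_of_sub_mem_orthogonal (U : Submodule ℝ F)
    [U.HasOrthogonalProjection] {x y px py : F} (hp : px - py ∈ U) (hx : x - px ∈ Uᗮ)
    (hy : y - py ∈ Uᗮ) : U.starProjection (x - y) = px - py :=
  U.eq_starProjection_of_mem_orthogonal hp <| by
    rw [sub_sub_sub_comm]
    exact Uᗮ.sub_mem hx hy

end MetricProjection

section AffineImage

variable {X Z F : Type*} [AddCommGroup X] [Module ℝ X] [AddCommGroup Z] [Module ℝ Z]
  [NormedAddCommGroup F] [InnerProductSpace ℝ F] (K : X →ₗ[ℝ] F) (A : X →ₗ[ℝ] Z) (b : Z)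

theorem add_mem_image_of_mem_map_ker {p u : F} (hp : p ∈ K '' {x | A x = b})
    (hu : u ∈ (LinearMap.ker A).map K) : p + u ∈ K '' {x | A x = b} := by
  obtain ⟨x, hx, rfl⟩ := hp
  obtain ⟨w, hw, rfl⟩ := hu
  refine ⟨x + w, ?_, map_add K x w⟩
  show A (x + w) = b
  rw [map_add, hx, LinearMap.mem_ker.mp hw, add_zero]

theorem sub_mem_map_ker_of_mem_image {p p' : F} (hp : p ∈ K '' {x | A x = b})
    (hp' : p' ∈ K '' {x | A x = b}) : p - p' ∈ (LinearMap.ker A).map K := by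
  obtain ⟨x, hx, rfl⟩ := hp
  obtain ⟨x', hx', rfl⟩ := hp'
  refine ⟨x - x', ?_, map_sub K x x'⟩
  rw [SetLike.mem_coe, LinearMap.mem_ker, map_sub, hx, hx', sub_self]

theorem starProjection_map_ker_sub_eq [((LinearMap.ker A).map K).HasOrthogonalProjection]
    {P : F → F} (hP : ∀ q, P q ∈ K '' {x | A x = b} ∧
      ∀ v ∈ K '' {x | A x = b}, ‖q - P q‖ ≤ ‖q - v‖) (x y : F) :
    ((LinearMap.ker A).map K).starProjection (x - y) = P x - P y := by
  have hperp : ∀ q, q - P q ∈ ((LinearMap.ker A).map K)ᗮ := fun q =>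
    sub_mem_orthogonal_of_forall_norm_sub_le
      (fun _ hp _ hu => add_mem_image_of_mem_map_ker K A b hp hu) (hP q).1 (hP q).2
  exact Submodule.starProjection_sub_eq_of_sub_mem_orthogonal _
    (sub_mem_map_ker_of_mem_image K A b (hP x).1 (hP y).1) (hperp x) (hperp y)

end AffineImage

section Blockwise

variable {N d : ℕ}

theorem starProjection_vanishingOn_apply (s : Set (Fin N)) (z : Vsp N d) (j : Fin N) :
    (vanishingOn (d := d) s).starProjection z j = if j ∈ s then 0 else z j := by
  have hproj : (vanishingOn (d := d) s).starProjection z =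
      WithLp.toLp 2 (fun j => if j ∈ s then 0 else z j) := by
    refine Submodule.eq_starProjection_of_mem_of_inner_eq_zero (fun j hj => by simp [hj]) ?_
    intro w hw
    refine Finset.sum_eq_zero fun j _ => ?_
    by_cases hj : j ∈ s
    · simp [hw j hj]
    · simp [hj]
  rw [hproj, PiLp.toLp_apply]

theorem shrink_eq_starProjection_vanishingOn {s : Set (Fin N)} {τ : ℝ} {p : Vsp N d}
    (hp : ∀ j, (j ∈ s → ‖p j‖ ≤ τ) ∧ (j ∉ s → τ < ‖p j‖)) :
    shrink τ p = (vanishingOn s).starProjection (p - τ • nrmOp p) := by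
  ext j : 1
  rw [starProjection_vanishingOn_apply]
  by_cases hj : j ∈ s
  · simp [shrink, hj, (hp j).1 hj]
  · by_cases hpj : p j = 0
    · simp [shrink, nrmOp, hj, hpj]
    · simp [shrink, nrmOp, hj, hpj, not_le.mpr ((hp j).2 hj), smul_smul, div_eq_mul_inv]

end Blockwise

theorem tv_cs_relaxed_drs_difference_decomposition_general
    {N d : ℕ}
    {X Z : Type*} [NormedAddCommGroup X] [InnerProductSpace ℝ X]
    [NormedAddCommGroup Z] [InnerProductSpace ℝ Z]
    (K : X →ₗ[ℝ] Vsp N d) (A : X →ₗ[ℝ] Z) (b : Z)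
    -- `P` is the metric projection onto the affine set `V_b = {K u : A u = b}`
    (P : Vsp N d → Vsp N d)
    (hP : ∀ q : Vsp N d, (∃ u, A u = b ∧ K u = P q) ∧
      ∀ v, (∃ u, A u = b ∧ K u = v) → ‖q - P q‖ ≤ ‖q - v‖)
    (τ : ℝ) (lam : ℝ)
    (vstar : Vsp N d)
    -- `C` is the orthogonal projection onto `U = K(ker A)`
    (C : Vsp N d →L[ℝ] Vsp N d)
    (hC : C = ((LinearMap.ker A).map K).subtypeL ∘L
      Submodule.orthogonalProjectionOnto ((LinearMap.ker A).map K))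
    -- `P_S` is the orthogonal projection onto `W = {z : z_j = 0 for all j ∉ S}`
    (PS : Vsp N d →L[ℝ] Vsp N d)
    (hPS : PS = (vanishingOn (d := d) {j | vstar j = 0}).subtypeL ∘L
      Submodule.orthogonalProjectionOnto (vanishingOn (d := d) {j | vstar j = 0})) :
    ∀ q q' : Vsp N d,
      (∀ j, (vstar j = 0 → ‖q j‖ ≤ τ) ∧ (vstar j ≠ 0 → τ < ‖q j‖)) →
      (∀ j, (vstar j = 0 → ‖q' j‖ ≤ τ) ∧ (vstar j ≠ 0 → τ < ‖q' j‖)) →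
      ((1 - lam) • q + lam • (P ((2 : ℝ) • shrink τ q - q) + q - shrink τ q)) -
          ((1 - lam) • q' + lam • (P ((2 : ℝ) • shrink τ q' - q') + q' - shrink τ q')) =
        ((1 - lam) • (q - q') +
            lam • (C (PS (q - q')) +
              (((q - q') - PS (q - q')) - C ((q - q') - PS (q - q'))))) +
          (τ * lam) • ((PS (nrmOp q) - PS (nrmOp q')) -
            (2 : ℝ) • C (PS (nrmOp q) - PS (nrmOp q'))) := by
  intro q q' hq hq'
  have hPdiff : ∀ x y, P x = P y + C (x - y) := fun x y => by
    rw [hC, ← Submodule.starProjection, starProjection_map_ker_sub_eq K A b hP x y]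
    abel
  have hshrink : ∀ p : Vsp N d,
      (∀ j, (vstar j = 0 → ‖p j‖ ≤ τ) ∧ (vstar j ≠ 0 → τ < ‖p j‖)) →
      shrink τ p = PS (p - τ • nrmOp p) := fun p hp => by
    rw [hPS]
    exact shrink_eq_starProjection_vanishingOn hp
  rw [hshrink q hq, hshrink q' hq',
    hPdiff ((2 : ℝ) • PS (q - τ • nrmOp q) - q) ((2 : ℝ) • PS (q' - τ • nrmOp q') - q')]
  simp only [map_sub, map_smul]
  module

/-- Lemma 4.9 of the paper: on the set `Q`, the relaxed Douglas–Rachford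
operator `H_τ^λ = (1−λ)·id + λ·H_τ` decomposes as
`H_τ^λ(q) − H_τ^λ(q') = ((1−λ)·id + λ(C∘P_S + (id−C)∘(id−P_S)))(q−q')
  + τλ(id−2C)(P_S 𝒩(q) − P_S 𝒩(q'))`. -/
theorem tv_cs_relaxed_drs_difference_decomposition
    {N d : ℕ} (hN : 0 < N) (hd : 0 < d)
    {X Z : Type*} [NormedAddCommGroup X] [InnerProductSpace ℝ X] [FiniteDimensional ℝ X]
    [NormedAddCommGroup Z] [InnerProductSpace ℝ Z] [FiniteDimensional ℝ Z]
    (K : X →ₗ[ℝ] Vsp N d) (A : X →ₗ[ℝ] Z) (b : Z) (hb : ∃ u, A u = b)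
    -- `P` is the metric projection onto the affine set `V_b = {K u : A u = b}`
    (P : Vsp N d → Vsp N d)
    (hP : ∀ q : Vsp N d, (∃ u, A u = b ∧ K u = P q) ∧
      ∀ v, (∃ u, A u = b ∧ K u = v) → ‖q - P q‖ ≤ ‖q - v‖)
    (τ : ℝ) (hτ : 0 < τ) (lam : ℝ)
    (vstar : Vsp N d)
    -- `C` is the orthogonal projection onto `U = K(ker A)`
    (C : Vsp N d →L[ℝ] Vsp N d)
    (hC : C = ((LinearMap.ker A).map K).subtypeL ∘L
      Submodule.orthogonalProjectionOnto ((LinearMap.ker A).map K))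
    -- `P_S` is the orthogonal projection onto `W = {z : z_j = 0 for all j ∉ S}`
    (PS : Vsp N d →L[ℝ] Vsp N d)
    (hPS : PS = (vanishingOn (d := d) {j | vstar j = 0}).subtypeL ∘L
      Submodule.orthogonalProjectionOnto (vanishingOn (d := d) {j | vstar j = 0})) :
    ∀ q q' : Vsp N d,
      (∀ j, (vstar j = 0 → ‖q j‖ ≤ τ) ∧ (vstar j ≠ 0 → τ < ‖q j‖)) →
      (∀ j, (vstar j = 0 → ‖q' j‖ ≤ τ) ∧ (vstar j ≠ 0 → τ < ‖q' j‖)) →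
      ((1 - lam) • q + lam • (P ((2 : ℝ) • shrink τ q - q) + q - shrink τ q)) -
          ((1 - lam) • q' + lam • (P ((2 : ℝ) • shrink τ q' - q') + q' - shrink τ q')) =
        ((1 - lam) • (q - q') +
            lam • (C (PS (q - q')) +
              (((q - q') - PS (q - q')) - C ((q - q') - PS (q - q'))))) +
          (τ * lam) • ((PS (nrmOp q) - PS (nrmOp q')) -
            (2 : ℝ) • C (PS (nrmOp q) - PS (nrmOp q'))) :=
  tv_cs_relaxed_drs_difference_decomposition_general K A b P hP τ lam vstar C hC PS hPS
end
end
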